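/- Let T be a standard Young tableau of shape (2,...,2) with k rows such that b_i ≠ 2i for all i ∈ [k-1]. Then {1, 2k} is an edge of the associated noncrossing matching M_T. -/

import Mathlib

/-- A standard Young tableau of two-column rectangular shape `(2,…,2)` with `k` rows:
a bijective filling of the `k × 2` grid by the values `1, …, 2k` that increases along
rows (left to right) and down columns. -/
structure SYT2 (k : ℕ) where
  entry : Fin k × Fin 2 → ℕ
  mem_Icc : ∀ x, entry x ∈ Finset.Icc 1 (2 * k)
  inj : Function.Injective entry
  row_lt : ∀ r : Fin k, entry (r, 0) < entry (r, 1)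
  col_lt : ∀ (r r' : Fin k) (c : Fin 2), r < r' → entry (r, c) < entry (r', c)

/-- The set of first-column entries of `T`. -/
def col1 {k : ℕ} (T : SYT2 k) : Finset ℕ :=
  Finset.univ.image fun r : Fin k => T.entry (r, 0)

/-- The set of second-column entries of `T`. -/
def col2 {k : ℕ} (T : SYT2 k) : Finset ℕ :=
  Finset.univ.image fun r : Fin k => T.entry (r, 1)

/-- `bseq T (i-1)` is `b_i`, the `i`-th smallest second-column entry of `T`
(the second column increases down the rows). -/
def bseq {k : ℕ} (T : SYT2 k) (i : ℕ) : ℕ :=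
  if h : i < k then T.entry (⟨i, h⟩, 1) else 0

/-- Greedy matching list: processing `b 0, b 1, …` in order, each `b i` is matched with
the largest entry of `c` smaller than `b i` that has not yet been used; `greedyList c b i`
is the list of the first `i` chosen partners. -/
def greedyList (c : Finset ℕ) (b : ℕ → ℕ) : ℕ → List ℕ
  | 0 => []
  | i + 1 =>
    let prev := greedyList c b i
    prev ++ [(c.filter fun a => a < b i ∧ a ∉ prev).sup id]

/-- The partner chosen for `b i` by the greedy matching procedure. -/
def greedyPartner (c : Finset ℕ) (b : ℕ → ℕ) (i : ℕ) : ℕ :=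
  (greedyList c b (i + 1)).getLastD 0

/-- The matching `M_T` associated to a two-column rectangular standard Young tableau `T`:
each second-column entry `b_i`, in increasing order, is matched with the largest
yet-unmatched first-column entry smaller than `b_i`.  Edges are recorded as ordered
pairs `(a, b)` with `a < b`. -/
def MT {k : ℕ} (T : SYT2 k) : Finset (ℕ × ℕ) :=
  (Finset.range k).image fun i => (greedyPartner (col1 T) (bseq T) i, bseq T i)

/-- `M` is a noncrossing perfect matching of `{1, …, 2k}`, with each edge recorded as an
ordered pair `(a, b)`, `a < b`: every vertex lies in exactly one edge, and there are no
crossing edges `{a, c}`, `{b, d}` with `a < b < c < d`. -/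
def IsNCPM (k : ℕ) (M : Finset (ℕ × ℕ)) : Prop :=
  (∀ p ∈ M, p.1 < p.2 ∧ p.1 ∈ Finset.Icc 1 (2 * k) ∧ p.2 ∈ Finset.Icc 1 (2 * k)) ∧
  (∀ v ∈ Finset.Icc 1 (2 * k), ∃! p, p ∈ M ∧ (v = p.1 ∨ v = p.2)) ∧
  (∀ p ∈ M, ∀ q ∈ M, ¬(p.1 < q.1 ∧ q.1 < p.2 ∧ p.2 < q.2))

/-!
Let `S_i` be the set of first-column entries that are below `b_{i+1}` and still unmatched when
the greedy procedure reaches `b_{i+1}`. Exactly `b_{i+1} - (i + 1)` entries below `b_{i+1}` lie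
in the first column and `i` of them are already matched, so `#S_i = b_{i+1} - 2i - 1`.
As long as `1` is unmatched it lies in `S_i`; the hypothesis `b_{i+1} ≠ 2(i + 1)` then forces
`#S_i ≥ 2`, so the chosen maximum is not `1`. At the last step `b_k = 2k`, so `S_{k-1} = {1}`.
-/

open Finset

section Greedy

variable {c : Finset ℕ} {b : ℕ → ℕ}

def greedyAvail (c : Finset ℕ) (b : ℕ → ℕ) (i : ℕ) : Finset ℕ :=
  {a ∈ c | a < b i ∧ a ∉ greedyList c b i}

lemma greedyList_succ (i : ℕ) :
    greedyList c b (i + 1) = greedyList c b i ++ [(greedyAvail c b i).sup id] := rfl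

lemma greedyPartner_eq_sup (i : ℕ) : greedyPartner c b i = (greedyAvail c b i).sup id := by
  simp [greedyPartner, greedyList_succ]

lemma card_greedyAvail_add {i : ℕ} (hnd : (greedyList c b i).Nodup)
    (hlen : (greedyList c b i).length = i) (hsub : ∀ x ∈ greedyList c b i, x ∈ c ∧ x < b i) :
    #(greedyAvail c b i) + i = #{a ∈ c | a < b i} := by
  have hsub' : (greedyList c b i).toFinset ⊆ {a ∈ c | a < b i} := fun x hx =>
    mem_filter.mpr (hsub x (List.mem_toFinset.mp hx))
  have hAvail : greedyAvail c b i = {a ∈ c | a < b i} \ (greedyList c b i).toFinset := by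
    ext a; simp [greedyAvail, and_assoc]
  have hcard : #(greedyList c b i).toFinset = i := by
    rw [List.card_toFinset, hnd.dedup, hlen]
  have hle := card_le_card hsub'
  rw [hcard] at hle
  rw [hAvail, card_sdiff_of_subset hsub', hcard]
  omega

lemma Finset.sup_id_mem {s : Finset ℕ} (hs : s.Nonempty) : s.sup id ∈ s :=
  sup'_eq_sup hs id ▸ s.max'_mem hs

lemma Finset.lt_sup_id_of_one_lt_card {s : Finset ℕ} {m : ℕ} (hm : ∀ a ∈ s, m ≤ a) (hs : 1 < #s) :
    m < s.sup id := by
  have hne : s.Nonempty := card_pos.mp (by omega)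
  calc m ≤ s.min' hne := le_min' _ _ _ hm
    _ < s.max' hne := min'_lt_max'_of_card s hs
    _ = s.sup id := sup'_eq_sup hne id

variable {m n : ℕ}

/-- `m` plays the role of `1`: it stays available throughout, and `hcard` keeps it from being
chosen before step `n`. -/
lemma greedyList_invariant (hm : m ∈ c) (hmin : ∀ a ∈ c, m ≤ a) (hmb : ∀ j ≤ n, m < b j)
    (hb : ∀ j < n, b j < b (j + 1)) (hcard : ∀ j < n, #{a ∈ c | a < b j} ≠ j + 1) :
    ∀ i ≤ n, (greedyList c b i).Nodup ∧ (greedyList c b i).length = i ∧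
      ∀ x ∈ greedyList c b i, x ∈ c ∧ m < x ∧ x < b i := by
  intro i
  induction i with
  | zero => simp [greedyList]
  | succ i ih =>
    intro hi
    obtain ⟨hnd, hlen, hmem⟩ := ih (by omega)
    have hm_avail : m ∈ greedyAvail c b i :=
      mem_filter.mpr ⟨hm, hmb i (by omega), fun h => (hmem m h).2.1.false⟩
    have hcard_avail := card_greedyAvail_add hnd hlen fun x hx => ⟨(hmem x hx).1, (hmem x hx).2.2⟩
    have htwo : 1 < #(greedyAvail c b i) := by
      have := card_pos.mpr ⟨m, hm_avail⟩
      have := hcard i (by omega)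
      omega
    obtain ⟨hmax_c, hmax_lt, hmax_new⟩ := mem_filter.mp (sup_id_mem ⟨m, hm_avail⟩)
    rw [greedyList_succ]
    refine ⟨hnd.append (List.nodup_singleton _) (List.disjoint_singleton.mpr hmax_new),
      by simp [hlen], fun x hx => ?_⟩
    rcases List.mem_append.mp hx with hx | hx
    · exact ⟨(hmem x hx).1, (hmem x hx).2.1, (hmem x hx).2.2.trans (hb i (by omega))⟩
    · rw [List.mem_singleton.mp hx]
      exact ⟨hmax_c, lt_sup_id_of_one_lt_card (fun a ha => hmin a (mem_filter.mp ha).1) htwo,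
        hmax_lt.trans (hb i (by omega))⟩

lemma greedyPartner_eq_of_card (hm : m ∈ c) (hmin : ∀ a ∈ c, m ≤ a) (hmb : ∀ j ≤ n, m < b j)
    (hb : ∀ j < n, b j < b (j + 1)) (hcard : ∀ j < n, #{a ∈ c | a < b j} ≠ j + 1)
    (hlast : #{a ∈ c | a < b n} = n + 1) : greedyPartner c b n = m := by
  obtain ⟨hnd, hlen, hmem⟩ := greedyList_invariant hm hmin hmb hb hcard n le_rfl
  have hm_avail : m ∈ greedyAvail c b n :=
    mem_filter.mpr ⟨hm, hmb n le_rfl, fun h => (hmem m h).2.1.false⟩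
  have hcard_avail := card_greedyAvail_add hnd hlen fun x hx => ⟨(hmem x hx).1, (hmem x hx).2.2⟩
  obtain ⟨a, ha⟩ := card_eq_one.mp (show #(greedyAvail c b n) = 1 by omega)
  rw [ha, mem_singleton] at hm_avail
  rw [greedyPartner_eq_sup, ha, hm_avail, sup_singleton, id]

end Greedy

namespace SYT2

variable {k : ℕ} (T : SYT2 k)

lemma strictMono_entry (j : Fin 2) : StrictMono fun r => T.entry (r, j) :=
  fun r r' h => T.col_lt r r' j h

lemma one_le_entry (x : Fin k × Fin 2) : 1 ≤ T.entry x := (Finset.mem_Icc.mp (T.mem_Icc x)).1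

lemma entry_le (x : Fin k × Fin 2) : T.entry x ≤ 2 * k := (Finset.mem_Icc.mp (T.mem_Icc x)).2

lemma entry_le_entry_one (r : Fin k) (j : Fin 2) : T.entry (r, j) ≤ T.entry (r, 1) := by
  fin_cases j
  exacts [(T.row_lt r).le, le_rfl]

lemma image_entry : univ.image T.entry = Icc 1 (2 * k) := by
  refine eq_of_subset_of_card_le (image_subset_iff.mpr fun x _ => T.mem_Icc x) ?_
  rw [card_image_of_injective _ T.inj, Nat.card_Icc, card_univ, Fintype.card_prod,
    Fintype.card_fin, Fintype.card_fin]
  omega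

lemma exists_entry_eq {v : ℕ} (hv : v ∈ Icc 1 (2 * k)) : ∃ x, T.entry x = v := by
  simpa using (T.image_entry ▸ hv : v ∈ univ.image T.entry)

lemma col1_union_col2 : col1 T ∪ col2 T = Icc 1 (2 * k) := by
  rw [← T.image_entry]
  ext a
  simp [col1, col2, Fin.exists_fin_two, exists_or]

lemma disjoint_col1_col2 : Disjoint (col1 T) (col2 T) := by
  simp only [disjoint_left, col1, col2, mem_image, mem_univ, true_and, not_exists]
  rintro _ ⟨r, rfl⟩ r' h
  simpa using congrArg Prod.snd (T.inj h)

lemma one_mem_col1 (hk : 1 ≤ k) : 1 ∈ col1 T := by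
  obtain ⟨⟨r, j⟩, hr⟩ := T.exists_entry_eq (v := 1) (by simp; omega)
  fin_cases j
  · exact mem_image.mpr ⟨r, mem_univ _, hr⟩
  · have := T.row_lt r
    have := T.one_le_entry (r, 0)
    simp_all

lemma one_le_of_mem_col1 {a : ℕ} (ha : a ∈ col1 T) : 1 ≤ a :=
  (Finset.mem_Icc.mp ((col1_union_col2 T).subset (mem_union_left _ ha))).1

lemma bseq_eq {i : ℕ} (hi : i < k) : bseq T i = T.entry (⟨i, hi⟩, 1) := dif_pos hi

lemma bseq_lt_bseq_succ {i : ℕ} (hi : i + 1 < k) : bseq T i < bseq T (i + 1) := by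
  rw [T.bseq_eq (by omega), T.bseq_eq hi]
  exact T.strictMono_entry 1 (Fin.mk_lt_mk.mpr (Nat.lt_succ_self i))

lemma one_lt_bseq {i : ℕ} (hi : i < k) : 1 < bseq T i := by
  rw [T.bseq_eq hi]
  have := T.row_lt ⟨i, hi⟩
  have := T.one_le_entry (⟨i, hi⟩, 0)
  omega

lemma bseq_last (hk : 1 ≤ k) : bseq T (k - 1) = 2 * k := by
  obtain ⟨⟨r, j⟩, hr⟩ := T.exists_entry_eq (v := 2 * k) (by simp; omega)
  have hle : T.entry (r, j) ≤ T.entry (⟨k - 1, by omega⟩, 1) :=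
    (T.entry_le_entry_one r j).trans
      ((T.strictMono_entry 1).monotone (Fin.mk_le_mk.mpr (by omega) : r ≤ ⟨k - 1, by omega⟩))
  have := T.entry_le (⟨k - 1, by omega⟩, 1)
  rw [T.bseq_eq (by omega)]
  omega

lemma card_col2_filter_lt (i : Fin k) : #{a ∈ col2 T | a < T.entry (i, 1)} = i := by
  rw [col2, filter_image, card_image_of_injective _ (T.strictMono_entry 1).injective]
  simp_rw [(T.strictMono_entry 1).lt_iff_lt]
  rw [filter_gt_eq_Iio, Fin.card_Iio]

lemma card_col1_filter_lt_bseq {i : ℕ} (hi : i < k) :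
    #{a ∈ col1 T | a < bseq T i} + (i + 1) = bseq T i := by
  rw [T.bseq_eq hi]
  set e := T.entry (⟨i, hi⟩, 1)
  have hIcc : #{a ∈ Icc 1 (2 * k) | a < e} = e - 1 := by
    have := T.entry_le (⟨i, hi⟩, 1)
    rw [show {a ∈ Icc 1 (2 * k) | a < e} = Ico 1 e by
      ext a; simp only [mem_filter, Finset.mem_Icc, mem_Ico]; omega]
    exact Nat.card_Ico _ _
  rw [← col1_union_col2, filter_union,
    card_union_of_disjoint (disjoint_filter_filter T.disjoint_col1_col2),
    card_col2_filter_lt, Fin.val_mk] at hIcc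
  have := T.one_le_entry (⟨i, hi⟩, 1)
  omega

end SYT2

/-- If `b_i ≠ 2i` for all `i ∈ [k-1]` (encoded by row indices `r = i - 1 : Fin k`),
then `{1, 2k}` is an edge of the associated noncrossing matching `M_T`. -/
theorem one_matched_to_top (k : ℕ) (hk : 1 ≤ k) (T : SYT2 k)
    (h : ∀ r : Fin k, r.1 + 1 < k → T.entry (r, 1) ≠ 2 * (r.1 + 1)) :
    (1, 2 * k) ∈ MT T := by
  have hlast : k - 1 < k := by omega
  have hpartner : greedyPartner (col1 T) (bseq T) (k - 1) = 1 := by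
    refine greedyPartner_eq_of_card (T.one_mem_col1 hk) (fun a => T.one_le_of_mem_col1)
      (fun j hj => T.one_lt_bseq (by omega)) (fun j hj => T.bseq_lt_bseq_succ (by omega))
      (fun j hj => ?_) ?_
    · have hb : bseq T j ≠ 2 * (j + 1) := by
        rw [T.bseq_eq (by omega)]
        exact h ⟨j, by omega⟩ (by simp only; omega)
      have := T.card_col1_filter_lt_bseq (show j < k by omega)
      omega
    · have := T.card_col1_filter_lt_bseq hlast
      rw [T.bseq_last hk] at this ⊢
      omega
  exact mem_image.mpr ⟨k - 1, mem_range.mpr hlast, by rw [hpartner, T.bseq_last hk]⟩
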